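/- The relation ≤ on S_n defined by: π ≤ σ iff every cycle of π is contained in a cycle of σ and, for each cycle C of σ, the restriction of π to C is non-crossing with respect to the cyclic order of C, is a partial order (reflexive, antisymmetric, transitive) on S_n. -/

import Mathlib

/-!
Write `#(σ)` for the number of cycles and `|σ| = n - #(σ)`. Multiplying by a transposition
changes `#(σ)` by at most one, and `swap x (σ x) * σ` splits off the fixed point `x`; induction
on `|σ|` then gives the triangle inequality `|στ| ≤ |σ| + |τ|`. When the cycles of `π` refine
those of `σ`, the quantities `#(π)`, `#(π⁻¹σ)`, `n` and `#(σ)` are sums over the cycles `C` of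
`σ`, and on each `C` the triangle inequality reads `#(π|C) + #(π⁻¹σ|C) ≤ |C| + 1`. Hence
`π ≤ σ` iff `π` refines `σ` and `|π| + |π⁻¹σ| = |σ|`, i.e. `π` lies on a geodesic from `1` to
`σ`. Reflexivity is immediate, transitivity follows from the triangle inequality, and if
`π ≤ σ ≤ π` then `π` and `σ` have the same cycles, so `|π⁻¹σ| = 0`.
-/

open Equiv

namespace ThirdOrderFree

variable {α : Type*}

/-- The setoid whose classes are the cycles (orbits) of a permutation. -/
def sameCycleSetoid (σ : Perm α) : Setoid α :=
  ⟨σ.SameCycle,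
    ⟨fun x => Equiv.Perm.SameCycle.refl σ x, fun h => h.symm, fun h h' => h.trans h'⟩⟩

/-- Number of cycles (orbits, including fixed points) of a permutation. -/
noncomputable def numCycles (σ : Perm α) : ℕ :=
  Nat.card (Quotient (sameCycleSetoid σ))

/-- The length `|σ| = n - #(σ)`. -/
noncomputable def len (σ : Perm α) : ℕ :=
  Nat.card α - numCycles σ

/-- Join of the cycle partitions of two permutations. -/
def joinSetoid (π σ : Perm α) : Setoid α :=
  sameCycleSetoid π ⊔ sameCycleSetoid σ

/-- Number of blocks of `π ∨ σ`. -/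
noncomputable def numBlocks (π σ : Perm α) : ℕ :=
  Nat.card (Quotient (joinSetoid π σ))

/-- `π ∨ σ` is the one-block partition. -/
def JoinTop (π σ : Perm α) : Prop :=
  ∀ x y : α, (joinSetoid π σ).r x y

/-- `π` is a non-crossing (annular) permutation with respect to `γ`. -/
def SNC (γ π : Perm α) : Prop :=
  JoinTop π γ ∧
    numCycles π + numCycles (π⁻¹ * γ) + numCycles γ = Nat.card α + 2

/-- `τ` separates the points of `N`: no cycle of `τ` contains two distinct points of `N`. -/
def Separates (τ : Perm α) (N : Set α) : Prop :=
  ∀ x ∈ N, ∀ y ∈ N, τ.SameCycle x y → x = y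

/-- The first-return map of `σ` on the set `{x | p x}`. -/
noncomputable def firstReturn (σ : Perm α) (p : α → Prop) (x : α) : α :=
  (σ ^ sInf {k : ℕ | 0 < k ∧ p ((σ ^ k) x)}) x

open Classical in
/-- The restriction of `σ` to `{x | p x}`: the unique permutation agreeing with the
first-return map (it exists whenever `α` is finite). -/
noncomputable def restrictPerm (σ : Perm α) (p : α → Prop) : Perm {x // p x} :=
  if h : ∃ e : Perm {x // p x}, ∀ x : {x // p x}, (e x : α) = firstReturn σ p (x : α)
  then h.choose else 1

/-- `π ≤ σ` : each cycle of `π` is contained in a cycle of `σ` and on each cycle of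
`σ` the restriction of `π` is a non-crossing permutation of that cycle. -/
def le' (π σ : Perm α) : Prop :=
  (∀ x y : α, π.SameCycle x y → σ.SameCycle x y) ∧
  ∀ x : α,
    numCycles (restrictPerm π (σ.SameCycle x)) +
      numCycles ((restrictPerm π (σ.SameCycle x))⁻¹ * restrictPerm σ (σ.SameCycle x)) =
      Nat.card {y // σ.SameCycle x y} + 1

/-- `π ≲ σ` : on each block of `π ∨ σ`, `π` is annular non-crossing w.r.t. `σ`. -/
def ncRel (π σ : Perm α) : Prop :=
  ∀ x : α,
    SNC (restrictPerm σ ((joinSetoid π σ).r x)) (restrictPerm π ((joinSetoid π σ).r x))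

/-- The permutation of `Σ i, Fin (n i)` rotating each block: the product of the
directed cycles `T i` of lengths `n i`. -/
def blockRotate {ι : Type*} (n : ι → ℕ) : Perm ((i : ι) × Fin (n i)) :=
  Equiv.sigmaCongrRight fun i => finRotate (n i)

/-- The first elements of the blocks. -/
def zeroSection {ι : Type*} (n : ι → ℕ) (hn : ∀ i, 0 < n i) :
    ι ≃ {x : (i : ι) × Fin (n i) // x.2.val = 0} where
  toFun i := ⟨⟨i, ⟨0, hn i⟩⟩, rfl⟩
  invFun x := x.1.1
  left_inv i := rfl
  right_inv := fun x => by
    obtain ⟨⟨i, j⟩, hj⟩ := x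
    exact Subtype.ext (congrArg (Sigma.mk i) (Fin.ext hj.symm))

/-- `π_{\vec n}` : merge the blocks `T i` along the cycles of `π`; within a block it
moves forward, and the last element of block `i` is sent to the first element of
block `π i`. -/
def mergePerm {ι : Type*} (n : ι → ℕ) (hn : ∀ i, 0 < n i) (π : Perm ι) :
    Perm ((i : ι) × Fin (n i)) :=
  (π.extendDomain (zeroSection n hn)) * blockRotate n

theorem _root_.Setoid.map_of_le_surjective {s t : Setoid α} (h : s ≤ t) :
    Function.Surjective (Setoid.map_of_le h) :=
  Quotient.ind fun a => ⟨Quotient.mk s a, rfl⟩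

theorem _root_.Setoid.card_quotient_le_of_le [Finite α] {s t : Setoid α} (h : s ≤ t) :
    Nat.card (Quotient t) ≤ Nat.card (Quotient s) :=
  Nat.card_le_card_of_surjective _ (Setoid.map_of_le_surjective h)

theorem _root_.Setoid.le_of_le_of_card_quotient_le [Finite α] {s t : Setoid α} (h : s ≤ t)
    (hc : Nat.card (Quotient s) ≤ Nat.card (Quotient t)) : t ≤ s := fun x y hxy =>
  Quotient.exact (((Setoid.map_of_le_surjective h).bijective_of_nat_card_le hc).1
    (Quotient.sound hxy : Quotient.mk t x = Quotient.mk t y))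

def _root_.Setoid.joinPair (r : Setoid α) (a b : α) : Setoid α where
  r x y := r x y ∨ (r x a ∧ r b y) ∨ (r x b ∧ r a y)
  iseqv := by
    constructor
    · exact fun x => Or.inl (r.refl x)
    · rintro x y (h | ⟨h1, h2⟩ | ⟨h1, h2⟩)
      · exact Or.inl (r.symm h)
      · exact Or.inr (Or.inr ⟨r.symm h2, r.symm h1⟩)
      · exact Or.inr (Or.inl ⟨r.symm h2, r.symm h1⟩)
    · rintro x y z (h | ⟨h1, h2⟩ | ⟨h1, h2⟩) (h' | ⟨h1', h2'⟩ | ⟨h1', h2'⟩)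
      · exact Or.inl (r.trans h h')
      · exact Or.inr (Or.inl ⟨r.trans h h1', h2'⟩)
      · exact Or.inr (Or.inr ⟨r.trans h h1', h2'⟩)
      · exact Or.inr (Or.inl ⟨h1, r.trans h2 h'⟩)
      · exact Or.inl (r.trans h1 (r.trans (r.symm (r.trans h2 h1')) h2'))
      · exact Or.inl (r.trans h1 h2')
      · exact Or.inr (Or.inr ⟨h1, r.trans h2 h'⟩)
      · exact Or.inl (r.trans h1 h2')
      · exact Or.inl (r.trans h1 (r.trans (r.symm (r.trans h2 h1')) h2'))

theorem _root_.Setoid.card_quotient_le_card_quotient_joinPair_add_one [Finite α] (r : Setoid α)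
    (a b : α) :
    Nat.card (Quotient r) ≤ Nat.card (Quotient (r.joinPair a b)) + 1 := by
  classical
  let f : Quotient r → Option (Quotient (r.joinPair a b)) := fun c =>
    if c = Quotient.mk r a then none else some (Setoid.map_of_le (fun _ _ => Or.inl) c)
  have hf : Function.Injective f := by
    refine Quotient.ind fun x => Quotient.ind fun y hxy => ?_
    by_cases hx : Quotient.mk r x = Quotient.mk r a <;>
      by_cases hy : Quotient.mk r y = Quotient.mk r a <;>
      simp only [f, hx, hy, if_true, if_false, reduceCtorEq, Option.some.injEq] at hxy
    · exact hx.trans hy.symm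
    · rcases Quotient.exact hxy with h | ⟨h, -⟩ | ⟨-, h⟩
      · exact Quotient.sound h
      · exact absurd (Quotient.sound h) hx
      · exact absurd (Quotient.sound (r.symm h)) hy
  simpa only [Finite.card_option] using Nat.card_le_card_of_injective f hf

theorem sameCycleSetoid_le_of_forall {σ : Perm α} {r : Setoid α} (h : ∀ z, r z (σ z)) :
    sameCycleSetoid σ ≤ r := by
  rintro x _ ⟨k, rfl⟩
  induction k using Int.induction_on with
  | zero => exact r.refl x
  | succ k ih =>
    rw [add_comm, zpow_add, zpow_one, Perm.mul_apply]
    exact r.trans ih (h _)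
  | pred k ih =>
    rw [sub_eq_add_neg, add_comm, zpow_add, zpow_neg_one, Perm.mul_apply]
    refine r.trans ih (r.symm ?_)
    simpa using h (σ⁻¹ ((σ ^ (-(k : ℤ))) x))

theorem sameCycleSetoid_le_iff {π σ : Perm α} :
    sameCycleSetoid π ≤ sameCycleSetoid σ ↔ ∀ x y, π.SameCycle x y → σ.SameCycle x y :=
  ⟨fun h _ _ hxy => h hxy, fun h x y hxy => h x y hxy⟩

theorem sameCycleSetoid_inv_mul_le {π σ : Perm α} (h : sameCycleSetoid π ≤ sameCycleSetoid σ) :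
    sameCycleSetoid (π⁻¹ * σ) ≤ sameCycleSetoid σ :=
  sameCycleSetoid_le_of_forall fun z =>
    (Perm.sameCycle_apply_right.mpr (Perm.SameCycle.refl σ z)).trans
      (h ⟨-1, by simp⟩)

theorem numCycles_le_card [Finite α] (σ : Perm α) : numCycles σ ≤ Nat.card α :=
  Nat.card_le_card_of_surjective _ Quotient.mk_surjective

theorem numCycles_one : numCycles (1 : Perm α) = Nat.card α := by
  have : sameCycleSetoid (1 : Perm α) = ⊥ := Setoid.ext fun _ _ => Perm.sameCycle_one
  rw [numCycles, this]
  exact Nat.card_congr Setoid.quotientBotEquiv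

theorem eq_one_of_card_le_numCycles [Finite α] {σ : Perm α} (h : Nat.card α ≤ numCycles σ) :
    σ = 1 := by
  have hle := Setoid.le_of_le_of_card_quotient_le
    (sameCycleSetoid_le_of_forall (σ := 1) (r := sameCycleSetoid σ) (Perm.SameCycle.refl σ))
    (by rwa [← numCycles, numCycles_one])
  ext x
  exact (Perm.sameCycle_one.mp (hle (Perm.sameCycle_apply_right.mpr
    (Perm.SameCycle.refl σ x)))).symm

section Swap

variable [DecidableEq α]

theorem sameCycleSetoid_le_joinPair_swap_mul (σ : Perm α) (a b : α) :
    sameCycleSetoid σ ≤ (sameCycleSetoid (swap a b * σ)).joinPair a b := by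
  refine sameCycleSetoid_le_of_forall fun z => ?_
  have hstep : (swap a b * σ).SameCycle z (swap a b (σ z)) := ⟨1, rfl⟩
  rw [swap_apply_def] at hstep
  split_ifs at hstep with ha hb
  · exact Or.inr (Or.inr ⟨hstep, ha ▸ Perm.SameCycle.refl _ _⟩)
  · exact Or.inr (Or.inl ⟨hstep, hb ▸ Perm.SameCycle.refl _ _⟩)
  · exact Or.inl hstep

theorem numCycles_swap_mul_le_add_one [Finite α] (σ : Perm α) (a b : α) :
    numCycles (swap a b * σ) ≤ numCycles σ + 1 :=
  (Setoid.card_quotient_le_card_quotient_joinPair_add_one _ a b).trans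
    (Nat.add_le_add_right (Setoid.card_quotient_le_of_le
      (sameCycleSetoid_le_joinPair_swap_mul σ a b)) 1)

theorem numCycles_lt_numCycles_swap_mul [Finite α] {σ : Perm α} {x : α} (hx : σ x ≠ x) :
    numCycles σ < numCycles (swap x (σ x) * σ) := by
  set σ' := swap x (σ x) * σ
  have hfix : σ' x = x := by simp [σ']
  have hle : sameCycleSetoid σ' ≤ sameCycleSetoid σ := by
    refine sameCycleSetoid_le_of_forall fun z => ?_
    have hz : σ.SameCycle z (σ z) := Perm.sameCycle_apply_right.mpr (Perm.SameCycle.refl σ z)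
    change σ.SameCycle z (swap x (σ x) (σ z))
    rw [swap_apply_def]
    split_ifs with h1 h2
    · subst h1
      exact Perm.sameCycle_apply_right.mpr hz
    · rw [σ.injective h2]
    · exact hz
  by_contra! hge
  have hxσx : σ'.SameCycle x (σ x) :=
    Setoid.le_of_le_of_card_quotient_le hle hge
      (Perm.sameCycle_apply_right.mpr (Perm.SameCycle.refl σ x))
  exact hx (hxσx.eq_of_left hfix).symm

end Swap

/-- The triangle inequality `|στ| ≤ |σ| + |τ|` for the length `|σ| = n - #(σ)`, written without
truncated subtraction. -/
theorem numCycles_add_numCycles_le [Finite α] (σ τ : Perm α) :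
    numCycles σ + numCycles τ ≤ Nat.card α + numCycles (σ * τ) := by
  classical
  induction hk : Nat.card α - numCycles σ using Nat.strong_induction_on generalizing σ with
  | _ k ih =>
  by_cases h1 : σ = 1
  · subst h1
    simp only [numCycles_one, one_mul, le_refl]
  obtain ⟨x, hx⟩ : ∃ x, σ x ≠ x := by
    by_contra! h
    exact h1 (Equiv.ext h)
  set σ' := swap x (σ x) * σ
  have hlt : numCycles σ < numCycles σ' := numCycles_lt_numCycles_swap_mul hx
  have ih' := ih _ (by have := numCycles_le_card σ'; omega) σ' rfl
  have hswap : numCycles (σ' * τ) ≤ numCycles (σ * τ) + 1 := by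
    rw [show σ' * τ = swap x (σ x) * (σ * τ) from mul_assoc _ _ _]
    exact numCycles_swap_mul_le_add_one (σ * τ) x (σ x)
  omega

theorem firstReturn_eq_of_invariant (σ : Perm α) {p : α → Prop}
    (hp : ∀ y, p (σ y) ↔ p y) {x : α} (hx : p x) : firstReturn σ p x = σ x := by
  have h1 : 1 ∈ {k : ℕ | 0 < k ∧ p ((σ ^ k) x)} := ⟨one_pos, by simpa [hp] using hx⟩
  rw [firstReturn, le_antisymm (Nat.sInf_le h1) (Nat.sInf_mem ⟨1, h1⟩).1, pow_one]

theorem restrictPerm_eq_subtypePerm (σ : Perm α) {p : α → Prop}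
    (hp : ∀ y, p (σ y) ↔ p y) : restrictPerm σ p = σ.subtypePerm hp := by
  have hex : ∃ e : Perm {x // p x}, ∀ x : {x // p x}, (e x : α) = firstReturn σ p x :=
    ⟨σ.subtypePerm hp, fun x => (firstReturn_eq_of_invariant σ hp x.2).symm⟩
  rw [restrictPerm, dif_pos hex]
  ext x
  rw [hex.choose_spec x, firstReturn_eq_of_invariant σ hp x.2]
  rfl

theorem mk_apply_eq_of_sameCycleSetoid_le {π : Perm α} {s : Setoid α}
    (h : sameCycleSetoid π ≤ s) (y : α) : Quotient.mk s (π y) = Quotient.mk s y :=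
  Quotient.sound (h (Perm.sameCycle_apply_left.mpr (Perm.SameCycle.refl π y)))

def restrictToClass {π : Perm α} {s : Setoid α} (h : sameCycleSetoid π ≤ s) (c : Quotient s) :
    Perm {y // Quotient.mk s y = c} :=
  π.subtypePerm fun y => by rw [mk_apply_eq_of_sameCycleSetoid_le h]

theorem restrictPerm_eq_restrictToClass {π : Perm α} {s : Setoid α}
    (h : sameCycleSetoid π ≤ s) (c : Quotient s) :
    restrictPerm π (Quotient.mk s · = c) = restrictToClass h c :=
  restrictPerm_eq_subtypePerm π _

section Decomposition

variable [Finite α] {s : Setoid α} [Fintype (Quotient s)]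

theorem numCycles_eq_sum_numCycles_restrictToClass {π : Perm α} (h : sameCycleSetoid π ≤ s) :
    numCycles π = ∑ c : Quotient s, numCycles (restrictToClass h c) := by
  rw [numCycles, ← Nat.card_congr (Equiv.sigmaFiberEquiv (Setoid.map_of_le h)), Nat.card_sigma]
  exact Finset.sum_congr rfl fun c _ => Nat.card_congr <|
    Equiv.subtypeQuotientEquivQuotientSubtype (Quotient.mk s · = c) _ (fun _ => Iff.rfl)
      fun _ _ => Perm.sameCycle_subtypePerm

theorem card_eq_sum_card_class (s : Setoid α) [Fintype (Quotient s)] :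
    Nat.card α = ∑ c : Quotient s, Nat.card {y // Quotient.mk s y = c} := by
  rw [← Nat.card_congr (Equiv.sigmaFiberEquiv (Quotient.mk s)), Nat.card_sigma]

end Decomposition

theorem numCycles_restrictToClass_self (σ : Perm α) (c : Quotient (sameCycleSetoid σ)) :
    numCycles (restrictToClass (le_refl (sameCycleSetoid σ)) c) = 1 := by
  induction c using Quotient.ind with | _ x =>
  refine Nat.card_eq_one_iff_unique.mpr ⟨⟨Quotient.ind₂ fun y z => Quotient.sound ?_⟩,
    ⟨Quotient.mk _ ⟨x, rfl⟩⟩⟩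
  exact Perm.sameCycle_subtypePerm.mpr (Quotient.exact (y.2.trans z.2.symm))

def NonCrossingOn (π σ : Perm α) (p : α → Prop) : Prop :=
  numCycles (restrictPerm π p) +
    numCycles ((restrictPerm π p)⁻¹ * restrictPerm σ p) = Nat.card {y // p y} + 1

section Cycles

variable {π σ : Perm α} (hπ : sameCycleSetoid π ≤ sameCycleSetoid σ)
  (c : Quotient (sameCycleSetoid σ))

theorem nonCrossingOn_class_iff :
    NonCrossingOn π σ (Quotient.mk _ · = c) ↔
      numCycles (restrictToClass hπ c) +
        numCycles (restrictToClass (sameCycleSetoid_inv_mul_le hπ) c) =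
      Nat.card {y // Quotient.mk _ y = c} + numCycles (restrictToClass le_rfl c) := by
  rw [NonCrossingOn, restrictPerm_eq_restrictToClass hπ,
    restrictPerm_eq_restrictToClass le_rfl, numCycles_restrictToClass_self]
  rfl

theorem numCycles_restrictToClass_add_le [Finite α] :
    numCycles (restrictToClass hπ c) +
        numCycles (restrictToClass (sameCycleSetoid_inv_mul_le hπ) c) ≤
      Nat.card {y // Quotient.mk _ y = c} + numCycles (restrictToClass le_rfl c) := by
  have hmul : restrictToClass hπ c * restrictToClass (sameCycleSetoid_inv_mul_le hπ) c =
      restrictToClass le_rfl c := by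
    ext y
    simp [restrictToClass]
  rw [← hmul]
  exact numCycles_add_numCycles_le _ _

end Cycles

theorem le'_iff [Finite α] {π σ : Perm α} :
    le' π σ ↔ (∀ x y, π.SameCycle x y → σ.SameCycle x y) ∧
      numCycles π + numCycles (π⁻¹ * σ) = Nat.card α + numCycles σ := by
  show (_ ∧ ∀ x, NonCrossingOn π σ (σ.SameCycle x)) ↔ _
  refine and_congr_right fun h => ?_
  have hπ := sameCycleSetoid_le_iff.mpr h
  have : Fintype (Quotient (sameCycleSetoid σ)) := Fintype.ofFinite _
  rw [numCycles_eq_sum_numCycles_restrictToClass hπ,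
    numCycles_eq_sum_numCycles_restrictToClass (sameCycleSetoid_inv_mul_le hπ),
    numCycles_eq_sum_numCycles_restrictToClass (le_refl (sameCycleSetoid σ)),
    card_eq_sum_card_class (sameCycleSetoid σ), ← Finset.sum_add_distrib,
    ← Finset.sum_add_distrib,
    Finset.sum_eq_sum_iff_of_le fun c _ => numCycles_restrictToClass_add_le hπ c]
  simp only [Finset.mem_univ, true_implies, Quotient.forall]
  refine forall_congr' fun x => ?_
  have hcycle : σ.SameCycle x = (Quotient.mk (sameCycleSetoid σ) · = Quotient.mk _ x) :=
    funext fun y => propext (Quotient.eq.trans Perm.sameCycle_comm).symm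
  rw [hcycle]
  exact nonCrossingOn_class_iff hπ _

/-- the relation `≤` on `S_n` is a partial order. -/
theorem stmt2 {n : ℕ} :
    (∀ π : Equiv.Perm (Fin n), le' π π) ∧
    (∀ π σ : Equiv.Perm (Fin n), le' π σ → le' σ π → π = σ) ∧
    (∀ π σ ρ : Equiv.Perm (Fin n), le' π σ → le' σ ρ → le' π ρ) := by
  refine ⟨fun π => le'_iff.mpr ⟨fun _ _ h => h, ?_⟩, fun π σ hπσ hσπ => ?_,
    fun π σ ρ hπσ hσρ => ?_⟩
  · rw [inv_mul_cancel, numCycles_one, add_comm]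
  · obtain ⟨hle, hsum⟩ := le'_iff.mp hπσ
    have hsame : numCycles π = numCycles σ := by
      rw [numCycles, numCycles, le_antisymm (sameCycleSetoid_le_iff.mpr hle)
        (sameCycleSetoid_le_iff.mpr (le'_iff.mp hσπ).1)]
    exact inv_mul_eq_one.mp (eq_one_of_card_le_numCycles (by omega))
  · obtain ⟨hle₁, hsum₁⟩ := le'_iff.mp hπσ
    obtain ⟨hle₂, hsum₂⟩ := le'_iff.mp hσρ
    have htri₁ := numCycles_add_numCycles_le (π⁻¹ * σ) (σ⁻¹ * ρ)
    have htri₂ := numCycles_add_numCycles_le π (π⁻¹ * ρ)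
    rw [show π⁻¹ * σ * (σ⁻¹ * ρ) = π⁻¹ * ρ by group] at htri₁
    rw [mul_inv_cancel_left] at htri₂
    exact le'_iff.mpr ⟨fun x y h => hle₂ x y (hle₁ x y h), by omega⟩

end ThirdOrderFree
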